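/- arXiv:1905.01441 — 4 statements merged into one kernel-verified Lean document; each statement's English description precedes it below -/
import Mathlib

section
/- Let S be a continuous t-conorm on [0,1] with residuum ⊸ that is weaker than the Łukasiewicz t-conorm. Then d is a metric on [0,1]: for all x, y, z ∈ [0,1], d(x,y) = 0 if and only if x = y, d(x,y) = d(y,x), and d(x,y) ≤ d(x,z) + d(z,y). -/
open unitInterval

instance : Fact ((0:ℝ) ≤ 1) := ⟨zero_le_one⟩

/-- A continuous t-conorm on the unit interval `[0,1]`: continuous (w.r.t. the
Euclidean topology), commutative, associative, nondecreasing in each argument,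
with `0` as neutral element. -/
structure IsContTConorm (S : I → I → I) : Prop where
  continuous : Continuous fun p : I × I => S p.1 p.2
  comm : ∀ x y, S x y = S y x
  assoc : ∀ x y z, S (S x y) z = S x (S y z)
  mono : ∀ x₁ x₂ y₁ y₂, x₁ ≤ x₂ → y₁ ≤ y₂ → S x₁ y₁ ≤ S x₂ y₂
  zero_left : ∀ x, S 0 x = x

/-- The residuum of a t-conorm: `x ⊸ y = inf {z ∈ [0,1] : S(z,x) ≥ y}`. -/
noncomputable def resid (S : I → I → I) (x y : I) : I :=
  sInf {z : I | y ≤ S z x}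
/-- The distance induced by the residuum: `d(x,y) = max(x ⊸ y, y ⊸ x)`. -/
noncomputable def rdist (S : I → I → I) (x y : I) : I :=
  max (resid S x y) (resid S y x)

/-- `S` is weaker than the Łukasiewicz t-conorm `S_L(x,y) = min(x+y,1)`. -/
def WeakerThanLukasiewicz (S : I → I → I) : Prop :=
  ∀ x y : I, (S x y : ℝ) ≤ min ((x : ℝ) + (y : ℝ)) 1

/-
Continuity makes the infimum defining `x ⊸ y` attained, which yields the adjunction
`x ⊸ y ≤ z ↔ y ≤ S(z,x)`. Then `x ⊸ y = 0` exactly when `y ≤ x`, and from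
`y ≤ S(z ⊸ y, z) ≤ S(z ⊸ y, S(x ⊸ z, x)) = S(S(z ⊸ y, x ⊸ z), x)` the adjunction gives
`x ⊸ y ≤ S(z ⊸ y, x ⊸ z) ≤ (x ⊸ z) + (z ⊸ y)`, the last step being the comparison with
Łukasiewicz. Taking maxima turns these facts about `⊸` into the metric axioms for `d`.
-/

theorem rdist_comm (S : I → I → I) (x y : I) : rdist S x y = rdist S y x :=
  max_comm _ _

namespace IsContTConorm

variable {S : I → I → I}

theorem le_apply_resid (hS : IsContTConorm S) (x y : I) : y ≤ S (resid S x y) x := by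
  have hclosed : IsClosed {z : I | y ≤ S z x} :=
    isClosed_le continuous_const (hS.continuous.comp (continuous_id.prodMk continuous_const))
  have hne : {z : I | y ≤ S z x}.Nonempty := by
    refine ⟨1, le_one'.trans ?_⟩
    calc (1 : I) = S 1 0 := by rw [hS.comm, hS.zero_left]
      _ ≤ S 1 x := hS.mono 1 1 0 x le_rfl nonneg'
  exact hclosed.isCompact.sInf_mem hne

theorem resid_le_iff (hS : IsContTConorm S) {x y z : I} : resid S x y ≤ z ↔ y ≤ S z x :=
  ⟨fun h => (hS.le_apply_resid x y).trans (hS.mono _ _ x x h le_rfl), fun h => sInf_le h⟩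

theorem resid_eq_zero_iff (hS : IsContTConorm S) {x y : I} : resid S x y = 0 ↔ y ≤ x := by
  rw [le_antisymm_iff, and_iff_left nonneg', hS.resid_le_iff, hS.zero_left]

theorem resid_le_add (hS : IsContTConorm S) (hweak : WeakerThanLukasiewicz S) (x y z : I) :
    (resid S x y : ℝ) ≤ resid S x z + resid S z y := by
  set a := resid S z y
  set b := resid S x z
  have hy : y ≤ S (S a b) x :=
    calc y ≤ S a z := hS.le_apply_resid z y
      _ ≤ S a (S b x) := hS.mono a a z _ le_rfl (hS.le_apply_resid x z)
      _ = S (S a b) x := (hS.assoc a b x).symm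
  calc (resid S x y : ℝ) ≤ S a b := hS.resid_le_iff.mpr hy
    _ ≤ a + b := (hweak a b).trans (min_le_left _ _)
    _ = b + a := add_comm _ _

theorem rdist_eq_zero_iff (hS : IsContTConorm S) {x y : I} : rdist S x y = 0 ↔ x = y := by
  calc rdist S x y = 0 ↔ resid S x y = 0 ∧ resid S y x = 0 := by
        simp only [rdist, le_antisymm_iff, max_le_iff, nonneg', and_true]
    _ ↔ x = y := by rw [hS.resid_eq_zero_iff, hS.resid_eq_zero_iff, and_comm, le_antisymm_iff]

theorem rdist_le_add (hS : IsContTConorm S) (hweak : WeakerThanLukasiewicz S) (x y z : I) :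
    (rdist S x y : ℝ) ≤ rdist S x z + rdist S z y := by
  have hmax : ∀ a b : I, ((max a b : I) : ℝ) = max (a : ℝ) b :=
    fun _ _ => (Subtype.mono_coe _).map_max
  simp only [rdist, hmax]
  exact max_le
    ((hS.resid_le_add hweak x y z).trans (add_le_add (le_max_left _ _) (le_max_left _ _)))
    ((hS.resid_le_add hweak y x z).trans_eq (add_comm _ _) |>.trans
      (add_le_add (le_max_right _ _) (le_max_right _ _)))

end IsContTConorm

/-- For a continuous t-conorm weaker than Łukasiewicz, `d(x,y) = max(x ⊸ y, y ⊸ x)`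
is a metric on `[0,1]`. -/
theorem rdist_is_metric (S : I → I → I) (hS : IsContTConorm S)
    (hweak : WeakerThanLukasiewicz S) :
    ∀ x y z : I,
      (rdist S x y = 0 ↔ x = y) ∧
      rdist S x y = rdist S y x ∧
      (rdist S x y : ℝ) ≤ (rdist S x z : ℝ) + (rdist S z y : ℝ) := fun x y z =>
  ⟨hS.rdist_eq_zero_iff, rdist_comm S x y, hS.rdist_le_add hweak x y z⟩
end

section
/- Let S be a continuous t-conorm on [0,1] with residuum ⊸ that is weaker than the Łukasiewicz t-conorm. Then S is 1-Lipschitz from ([0,1]², 𝐝) to ([0,1], d): for all x₁, x₂, y₁, y₂ ∈ [0,1], d(S(x₁,x₂), S(y₁,y₂)) ≤ 𝐝((x₁,x₂),(y₁,y₂)). In particular S is (uniformly) continuous with respect to these metrics. -/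
open unitInterval

/-- The induced distance on `[0,1]²`:
`𝐝((x₁,x₂),(y₁,y₂)) = S(d(x₁,y₁), d(x₂,y₂))`. -/
noncomputable def rdist2 (S : I → I → I) (p q : I × I) : I :=
  S (rdist S p.1 q.1) (rdist S p.2 q.2)

lemma resid_le {S : I → I → I} {x y z : I} (h : y ≤ S z x) : resid S x y ≤ z :=
  sInf_le h

lemma le_S_resid (S : I → I → I) (hS : IsContTConorm S) (x y : I) :
    y ≤ S (resid S x y) x := by
  have hcl : IsClosed {z : I | y ≤ S z x} := by
    have hc : Continuous fun z : I => S z x :=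
      hS.continuous.comp (continuous_id.prodMk continuous_const)
    exact isClosed_le continuous_const hc
  have hne : ({z : I | y ≤ S z x}).Nonempty := by
    refine ⟨1, ?_⟩
    have := hS.mono y 1 0 x le_one' (zero_le' )
    simpa [hS.comm y 0, hS.zero_left] using this
  exact hcl.sInf_mem hne

/-- A continuous t-conorm weaker than Łukasiewicz is 1-Lipschitz from
`([0,1]², 𝐝)` to `([0,1], d)`. -/
theorem tconorm_lipschitz (S : I → I → I) (hS : IsContTConorm S)
    (hweak : WeakerThanLukasiewicz S) :
    ∀ x₁ x₂ y₁ y₂ : I,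
      rdist S (S x₁ x₂) (S y₁ y₂) ≤ rdist2 S (x₁, x₂) (y₁, y₂) := by
  intro x₁ x₂ y₁ y₂
  have key : ∀ a₁ a₂ b₁ b₂ : I,
      resid S (S a₁ a₂) (S b₁ b₂) ≤ S (rdist S a₁ b₁) (rdist S a₂ b₂) := by
    intro a₁ a₂ b₁ b₂
    apply resid_le
    have h1 : b₁ ≤ S (resid S a₁ b₁) a₁ := le_S_resid S hS a₁ b₁
    have h2 : b₂ ≤ S (resid S a₂ b₂) a₂ := le_S_resid S hS a₂ b₂
    calc S b₁ b₂ ≤ S (S (resid S a₁ b₁) a₁) (S (resid S a₂ b₂) a₂) :=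
          hS.mono _ _ _ _ h1 h2
      _ = S (S (resid S a₁ b₁) (resid S a₂ b₂)) (S a₁ a₂) := by
          rw [hS.assoc, hS.assoc, ← hS.assoc a₁, hS.comm a₁, hS.assoc]
      _ ≤ S (S (rdist S a₁ b₁) (rdist S a₂ b₂)) (S a₁ a₂) :=
          hS.mono _ _ _ _ (hS.mono _ _ _ _ (le_max_left _ _) (le_max_left _ _)) le_rfl
  have k1 := key x₁ x₂ y₁ y₂
  have k2 := key y₁ y₂ x₁ x₂
  rw [rdist, rdist2]
  refine max_le k1 ?_
  simpa [rdist, max_comm] using k2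
end

section
/- The function d_π is a metric on the unit interval [0,1]: for all x, y, z ∈ [0,1], d_π(x,y) = 0 if and only if x = y, d_π(x,y) = d_π(y,x), and d_π(x,y) ≤ d_π(x,z) + d_π(z,y). -/
open unitInterval

/-- `d_π(x,y) = |x − y|/(1 − min{x,y})` for `x ≠ y`, and `d_π(x,x) = 0`. -/
noncomputable def dpi (x y : I) : ℝ :=
  if x = y then 0 else |(x : ℝ) - (y : ℝ)| / (1 - min (x : ℝ) (y : ℝ))

/-!
For `x ≤ y ≤ 1` the distance is `(y - x)/(1 - x)`. With `z` between `x` and `y` the triangle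
inequality follows from `1 - z ≤ 1 - x`; with `z` outside, one of the two sides already
dominates `d_π(x,y)`, since `(y - x)/(1 - x)` grows as `y` increases or `x` decreases.
-/

/-- The formula of `d_π` on all of `ℝ`; it also vanishes on the diagonal. -/
noncomputable def dpiReal (x y : ℝ) : ℝ := |x - y| / (1 - min x y)

namespace dpiReal

variable {x y z : ℝ}

theorem comm (x y : ℝ) : dpiReal x y = dpiReal y x := by
  rw [dpiReal, dpiReal, abs_sub_comm, min_comm]

theorem self (x : ℝ) : dpiReal x x = 0 := by
  simp [dpiReal]

theorem of_le (h : x ≤ y) : dpiReal x y = (y - x) / (1 - x) := by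
  rw [dpiReal, abs_sub_comm, abs_of_nonneg (sub_nonneg.2 h), min_eq_left h]

theorem nonneg (hx : x ≤ 1) : 0 ≤ dpiReal x y :=
  div_nonneg (abs_nonneg _) (sub_nonneg.2 ((min_le_left x y).trans hx))

theorem pos (hx : x ≤ 1) (hy : y ≤ 1) (hxy : x ≠ y) : 0 < dpiReal x y := by
  have hmin : min x y < 1 := by
    rcases hxy.lt_or_gt with h | h
    · exact min_lt_of_left_lt (h.trans_le hy)
    · exact min_lt_of_right_lt (h.trans_le hx)
  exact div_pos (abs_pos.2 (sub_ne_zero.2 hxy)) (sub_pos.2 hmin)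

theorem triangle_of_lt (hy : y ≤ 1) (hz : z ≤ 1) (hxy : x < y) :
    dpiReal x y ≤ dpiReal x z + dpiReal z y := by
  have hx1 : 0 < 1 - x := by linarith
  rcases le_or_gt z x with hzx | hxz
  · have hz1 : 0 < 1 - z := by linarith
    calc dpiReal x y = (y - x) / (1 - x) := of_le hxy.le
      _ ≤ (y - z) / (1 - z) := by
        rw [div_le_div_iff₀ hx1 hz1]
        nlinarith [mul_nonneg (sub_nonneg.2 hzx) (sub_nonneg.2 hy)]
      _ = dpiReal z y := (of_le (hzx.trans hxy.le)).symm
      _ ≤ dpiReal x z + dpiReal z y := le_add_of_nonneg_left (nonneg (hxy.le.trans hy))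
  rcases lt_or_ge z y with hzy | hyz
  · have hz1 : 0 < 1 - z := by linarith
    calc dpiReal x y = (z - x) / (1 - x) + (y - z) / (1 - x) := by
          rw [of_le hxy.le, ← add_div]; ring
      _ ≤ (z - x) / (1 - x) + (y - z) / (1 - z) := by gcongr
      _ = dpiReal x z + dpiReal z y := by rw [of_le hxz.le, of_le hzy.le]
  · calc dpiReal x y = (y - x) / (1 - x) := of_le hxy.le
      _ ≤ (z - x) / (1 - x) := by gcongr
      _ = dpiReal x z := (of_le (hxy.le.trans hyz)).symm
      _ ≤ dpiReal x z + dpiReal z y := le_add_of_nonneg_right (nonneg hz)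

theorem triangle (hx : x ≤ 1) (hy : y ≤ 1) (hz : z ≤ 1) :
    dpiReal x y ≤ dpiReal x z + dpiReal z y := by
  rcases lt_trichotomy x y with hxy | rfl | hyx
  · exact triangle_of_lt hy hz hxy
  · rw [self]; exact add_nonneg (nonneg hx) (nonneg hz)
  · rw [comm x y, comm x z, comm z y, add_comm]
    exact triangle_of_lt hx hz hyx

end dpiReal

theorem dpi_eq_dpiReal (x y : I) : dpi x y = dpiReal x y := by
  unfold dpi
  split_ifs with h
  · rw [h, dpiReal.self]
  · rfl

/-- `d_π` is a metric on the unit interval `[0,1]`. -/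
theorem dpi_is_metric :
    ∀ x y z : I,
      (dpi x y = 0 ↔ x = y) ∧
      dpi x y = dpi y x ∧
      dpi x y ≤ dpi x z + dpi z y := by
  intro x y z
  simp only [dpi_eq_dpiReal]
  refine ⟨⟨fun h => ?_, fun h => h ▸ dpiReal.self _⟩, dpiReal.comm _ _,
    dpiReal.triangle x.2.2 y.2.2 z.2.2⟩
  by_contra hxy
  exact (dpiReal.pos x.2.2 y.2.2 (Subtype.coe_injective.ne hxy)).ne' h
end

section
/- In the metric space ([0,1], d_π), the open ball N_r(a) = {y ∈ [0,1] : d_π(a,y) < r} with center a and radius r is described as follows: if 0 < r < a < 1 then N_r(a) = ((a−r)/(1−r), a + r − ar); if a < r ≤ 1 then N_r(a) = [0, a + r − ar); and if a = 1 and 0 < r ≤ 1 then N_r(a) = {1}. -/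
open unitInterval

/-- Description of the open balls of the metric `d_π` on `[0,1]`:
for `0 < r < a < 1` the ball is `((a−r)/(1−r), a+r−ar)`; for `a < r ≤ 1` it is
`[0, a+r−ar)`; for `a = 1` and `0 < r ≤ 1` it is `{1}`. -/
theorem dpi_ball_description :
    ∀ (a : I) (r : ℝ),
      (0 < r → r < (a : ℝ) → (a : ℝ) < 1 →
        {y : I | dpi a y < r} =
          {y : I | ((a : ℝ) - r) / (1 - r) < (y : ℝ) ∧ (y : ℝ) < (a : ℝ) + r - (a : ℝ) * r}) ∧
      ((a : ℝ) < r → r ≤ 1 →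
        {y : I | dpi a y < r} = {y : I | (y : ℝ) < (a : ℝ) + r - (a : ℝ) * r}) ∧
      (a = 1 → 0 < r → r ≤ 1 → {y : I | dpi a y < r} = {1}) := by
  intro a r
  obtain ⟨ha0, ha1⟩ := a.2
  refine ⟨?_, ?_, ?_⟩
  · intro hr hra ha1'
    ext y
    obtain ⟨hy0, hy1⟩ := y.2
    simp only [Set.mem_setOf_eq, dpi]
    have hr1 : 0 < 1 - r := by linarith
    split_ifs with h
    · have hay : (a : ℝ) = y := congrArg _ h
      constructor
      · intro _
        constructor
        · rw [div_lt_iff₀ hr1]; nlinarith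
        · nlinarith
      · intro _; exact hr
    · have hne : (a:ℝ) ≠ (y:ℝ) := fun he => h (Subtype.ext he)
      rcases lt_or_gt_of_ne hne with hlt | hgt
      · rw [min_eq_left hlt.le, abs_of_neg (by linarith : (a:ℝ) - y < 0)]
        rw [div_lt_iff₀ (by linarith : (0:ℝ) < 1 - a)]
        constructor
        · intro hb
          refine ⟨?_, by nlinarith⟩
          rw [div_lt_iff₀ hr1]; nlinarith
        · intro ⟨_, hb⟩; nlinarith
      · rw [min_eq_right hgt.le, abs_of_pos (by linarith : (0:ℝ) < a - y)]
        have hy1' : (y:ℝ) < 1 := lt_trans hgt ha1'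
        rw [div_lt_iff₀ (by linarith : (0:ℝ) < 1 - y)]
        constructor
        · intro hb
          refine ⟨?_, by nlinarith⟩
          rw [div_lt_iff₀ hr1]; nlinarith
        · intro ⟨hl, _⟩
          rw [div_lt_iff₀ hr1] at hl; nlinarith
  · intro har hr1
    have ha1' : (a : ℝ) < 1 := lt_of_lt_of_le har hr1
    ext y
    obtain ⟨hy0, hy1⟩ := y.2
    simp only [Set.mem_setOf_eq, dpi]
    split_ifs with h
    · have hay : (a : ℝ) = y := congrArg _ h
      constructor
      · intro _; nlinarith
      · intro _; linarith
    · have hne : (a:ℝ) ≠ (y:ℝ) := fun he => h (Subtype.ext he)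
      rcases lt_or_gt_of_ne hne with hlt | hgt
      · rw [min_eq_left hlt.le, abs_of_neg (by linarith : (a:ℝ) - y < 0)]
        rw [div_lt_iff₀ (by linarith : (0:ℝ) < 1 - a)]
        constructor
        · intro hb; nlinarith
        · intro hb; nlinarith
      · rw [min_eq_right hgt.le, abs_of_pos (by linarith : (0:ℝ) < a - y)]
        have hy1' : (y:ℝ) < 1 := lt_trans hgt ha1'
        rw [div_lt_iff₀ (by linarith : (0:ℝ) < 1 - y)]
        constructor
        · intro _; nlinarith
        · intro _; nlinarith [mul_nonneg hy0 (by linarith : (0:ℝ) ≤ 1 - r)]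
  · intro ha hr0 hr1
    subst ha
    ext y
    obtain ⟨hy0, hy1⟩ := y.2
    simp only [Set.mem_setOf_eq, dpi, Set.mem_singleton_iff]
    split_ifs with h
    · simp [h.symm, hr0]
    · have hne : (1:ℝ) ≠ (y:ℝ) := fun he => h (Subtype.ext (by simpa using he))
      have hy1' : (y:ℝ) < 1 := lt_of_le_of_ne hy1 (Ne.symm (by simpa using hne))
      have : |((1:I):ℝ) - y| / (1 - min ((1:I):ℝ) y) = 1 := by
        rw [show ((1:I):ℝ) = (1:ℝ) from rfl, min_eq_right hy1,
          abs_of_pos (by linarith : (0:ℝ) < 1 - y), div_self (by linarith)]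
      rw [this]
      constructor
      · intro hlt; linarith
      · intro hy; exact absurd hy.symm h
end
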